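/- Let d_θ₂(y) = -(1/2){|y|^λ log|y| - (2/λ²)[log 2 + ψ(1+1/λ)]} and let Y have density f(y) = e^{-(1/2)|y|^λ}/(2^{1+1/λ}Γ(1+1/λ)) with λ ≥ 1. Then E[d_θ₂(Y)] = 0 and Var(d_θ₂(Y)) = (1/λ³)[ν(2+ν) + (1+1/λ)ψ'(1+1/λ)], where ν = log 2 + ψ(1+1/λ). -/

import Mathlib

open MeasureTheory Real

/-- The standardized exponential power density (APD with `θ₁ = 1/2`, `θ₂ = l`). -/
noncomputable def epdDensity (l y : ℝ) : ℝ :=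
  Real.exp (-(1 / 2) * |y| ^ l) / ((2 : ℝ) ^ (1 + 1 / l) * Real.Gamma (1 + 1 / l))

/-- The digamma function `ψ(x) = (log ∘ Γ)'(x)`. -/
noncomputable def digamma (x : ℝ) : ℝ :=
  deriv (fun y : ℝ => Real.log (Real.Gamma y)) x

/-- The trigamma function `ψ'`. -/
noncomputable def trigamma (x : ℝ) : ℝ :=
  deriv digamma x

/-- The score component `d_{θ₂}` evaluated at the null `θ₀ = (1/2, l)`. -/
noncomputable def dTheta2 (l y : ℝ) : ℝ :=
  -(1 / 2) * (|y| ^ l * Real.log |y| - (2 / l ^ 2) * (Real.log 2 + digamma (1 + 1 / l)))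

open Set Filter Asymptotics
open scoped Topology

/-!
Under `epdDensity l`, the variable `T = |Y| ^ l / 2` has the Gamma law of shape `1 / l`, and
`dTheta2 l Y = (ν / l - T log (2 T)) / l` with `ν = log 2 + ψ(1 + 1 / l)`. So both moments are
combinations of the log-moments `∫ e^{-t} t^{s-1} (log t)^k dt = Γ^{(k)}(s)`. These are Mellin
transforms of `(log t)^k e^{-t}`, and differentiating a Mellin transform multiplies the integrand
by `log t`. Hence `Γ' = ψ Γ` and
`Γ'' = (ψ' + ψ²) Γ`, and differentiating `Γ(s + 1) = s Γ(s)` expresses the log-moments at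
`s + 2 = 2 + 1 / l` through those at `s + 1`, i.e. through `ψ(1 + 1 / l)` and `ψ'(1 + 1 / l)`.
-/

noncomputable def logPowMulExp (k : ℕ) (t : ℝ) : ℂ := (log t : ℂ) ^ k * (exp (-t) : ℂ)

lemma log_smul_logPowMulExp (k : ℕ) :
    (fun t : ℝ => log t • logPowMulExp k t) = logPowMulExp (k + 1) := by
  funext t
  simp only [logPowMulExp, Complex.real_smul, pow_succ]
  ring

lemma locallyIntegrableOn_logPowMulExp (k : ℕ) :
    LocallyIntegrableOn (logPowMulExp k) (Ioi 0) := by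
  refine ContinuousOn.locallyIntegrableOn ?_ measurableSet_Ioi
  refine ContinuousOn.mul ?_ (by fun_prop)
  exact (Complex.continuous_ofReal.comp_continuousOn
    (continuousOn_log.mono fun t (ht : 0 < t) => ht.ne')).pow k

lemma logPowMulExp_isBigO_atTop (k : ℕ) (a : ℝ) : logPowMulExp k =O[atTop] (· ^ (-a)) := by
  induction k generalizing a with
  | zero =>
    rw [← isBigO_norm_left]
    simp only [logPowMulExp, pow_zero, one_mul, Complex.norm_real]
    simpa only [neg_one_mul] using
      (isLittleO_exp_neg_mul_rpow_atTop zero_lt_one (-a)).isBigO.norm_left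
  | succ k ih =>
    rw [← log_smul_logPowMulExp]
    exact isBigO_rpow_top_log_smul (lt_add_one a) (ih (a + 1))

lemma logPowMulExp_isBigO_nhdsGT_zero (k : ℕ) {b : ℝ} (hb : 0 < b) :
    logPowMulExp k =O[𝓝[>] 0] (· ^ (-b)) := by
  induction k generalizing b with
  | zero =>
    have h_one : logPowMulExp 0 =O[𝓝[>] 0] (fun _ => (1 : ℝ)) := by
      refine isBigO_const_of_tendsto (y := (1 : ℂ)) ?_ one_ne_zero
      have hcont : ContinuousAt (logPowMulExp 0) 0 := by
        unfold logPowMulExp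
        simp only [pow_zero, one_mul]
        fun_prop
      simpa [logPowMulExp] using hcont.continuousWithinAt (s := Ioi 0).tendsto
    refine h_one.trans (IsBigO.of_bound 1 ?_)
    filter_upwards [Ioo_mem_nhdsGT (zero_lt_one' ℝ)] with t ht
    rw [norm_one, one_mul, norm_of_nonneg (rpow_nonneg ht.1.le _)]
    exact one_le_rpow_of_pos_of_le_one_of_nonpos ht.1 ht.2.le (by linarith)
  | succ k ih =>
    rw [← log_smul_logPowMulExp]
    exact isBigO_rpow_zero_log_smul (half_lt_self hb) (ih (half_pos hb))

lemma mellinConvergent_logPowMulExp (k : ℕ) {s : ℂ} (hs : 0 < s.re) :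
    MellinConvergent (logPowMulExp k) s :=
  mellinConvergent_of_isBigO_rpow (locallyIntegrableOn_logPowMulExp k)
    (logPowMulExp_isBigO_atTop k _) (lt_add_one s.re)
    (logPowMulExp_isBigO_nhdsGT_zero k (half_pos hs)) (half_lt_self hs)

lemma hasDerivAt_mellin_logPowMulExp (k : ℕ) {s : ℂ} (hs : 0 < s.re) :
    HasDerivAt (mellin (logPowMulExp k)) (mellin (logPowMulExp (k + 1)) s) s := by
  simpa only [log_smul_logPowMulExp] using
    (mellin_hasDerivAt_of_isBigO_rpow (locallyIntegrableOn_logPowMulExp k)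
      (logPowMulExp_isBigO_atTop k _) (lt_add_one s.re)
      (logPowMulExp_isBigO_nhdsGT_zero k (half_pos hs)) (half_lt_self hs)).2

noncomputable def gammaLogMoment (k : ℕ) (s : ℝ) : ℝ :=
  ∫ t in Ioi 0, exp (-t) * t ^ (s - 1) * log t ^ k

lemma cpow_smul_logPowMulExp (k : ℕ) (s : ℝ) {t : ℝ} (ht : 0 < t) :
    (t : ℂ) ^ ((s : ℂ) - 1) • logPowMulExp k t =
      ((exp (-t) * t ^ (s - 1) * log t ^ k : ℝ) : ℂ) := by
  rw [show (s : ℂ) - 1 = ((s - 1 : ℝ) : ℂ) by push_cast; ring, ← Complex.ofReal_cpow ht.le]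
  simp only [logPowMulExp, smul_eq_mul]
  push_cast
  ring

lemma mellin_logPowMulExp_ofReal (k : ℕ) (s : ℝ) :
    mellin (logPowMulExp k) s = gammaLogMoment k s := by
  rw [mellin, gammaLogMoment]
  exact (setIntegral_congr_fun measurableSet_Ioi fun t ht => cpow_smul_logPowMulExp k s ht).trans
    integral_ofReal

lemma integrableOn_gammaLogMoment_integrand (k : ℕ) {s : ℝ} (hs : 0 < s) :
    IntegrableOn (fun t => exp (-t) * t ^ (s - 1) * log t ^ k) (Ioi 0) := by
  have h := (mellinConvergent_logPowMulExp k (s := s) (by simpa using hs)).re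
  refine IntegrableOn.congr_fun h (fun t ht => ?_) measurableSet_Ioi
  rw [cpow_smul_logPowMulExp k s ht]
  exact RCLike.ofReal_re _

lemma hasDerivAt_gammaLogMoment (k : ℕ) {s : ℝ} (hs : 0 < s) :
    HasDerivAt (gammaLogMoment k) (gammaLogMoment (k + 1) s) s := by
  simpa only [mellin_logPowMulExp_ofReal, Complex.ofReal_re] using
    (hasDerivAt_mellin_logPowMulExp k (s := s) (by simpa using hs)).real_of_complex

lemma gammaLogMoment_zero {s : ℝ} (hs : 0 < s) : gammaLogMoment 0 s = Gamma s := by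
  simp [gammaLogMoment, Gamma_eq_integral hs]

lemma hasDerivAt_Gamma_of_pos {s : ℝ} (hs : 0 < s) : HasDerivAt Gamma (gammaLogMoment 1 s) s :=
  (hasDerivAt_gammaLogMoment 0 hs).congr_of_eventuallyEq <|
    (eventually_gt_nhds hs).mono fun _ hx => (gammaLogMoment_zero hx).symm

lemma gammaLogMoment_one {s : ℝ} (hs : 0 < s) : gammaLogMoment 1 s = digamma s * Gamma s := by
  rw [digamma, ((hasDerivAt_Gamma_of_pos hs).log (Gamma_pos_of_pos hs).ne').deriv,
    div_mul_cancel₀ _ (Gamma_pos_of_pos hs).ne']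

lemma gammaLogMoment_two {s : ℝ} (hs : 0 < s) :
    gammaLogMoment 2 s = (trigamma s + digamma s ^ 2) * Gamma s := by
  have hΓ := (Gamma_pos_of_pos hs).ne'
  have hψ : digamma =ᶠ[𝓝 s] fun x => gammaLogMoment 1 x / gammaLogMoment 0 x :=
    (eventually_gt_nhds hs).mono fun x hx => by
      dsimp only
      rw [gammaLogMoment_one hx, gammaLogMoment_zero hx,
        mul_div_cancel_right₀ _ (Gamma_pos_of_pos hx).ne']
  have hψ' := ((hasDerivAt_gammaLogMoment 1 hs).div (hasDerivAt_gammaLogMoment 0 hs)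
    (by rwa [gammaLogMoment_zero hs])).congr_of_eventuallyEq hψ
  rw [trigamma, hψ'.deriv, gammaLogMoment_one hs, gammaLogMoment_zero hs]
  field_simp
  ring

lemma hasDerivAt_gammaLogMoment_add_one (k : ℕ) {s : ℝ} (hs : 0 < s) :
    HasDerivAt (fun x => gammaLogMoment k (x + 1)) (gammaLogMoment (k + 1) (s + 1)) s :=
  (hasDerivAt_gammaLogMoment k (by linarith)).comp_add_const s 1

lemma gammaLogMoment_succ_add_one (k : ℕ) {s : ℝ} (hs : 0 < s) :
    gammaLogMoment (k + 1) (s + 1) =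
      (k + 1) * gammaLogMoment k s + s * gammaLogMoment (k + 1) s := by
  induction k generalizing s with
  | zero =>
    have hrec : (fun x => x * gammaLogMoment 0 x) =ᶠ[𝓝 s] fun x => gammaLogMoment 0 (x + 1) :=
      (eventually_gt_nhds hs).mono fun x hx => by
        dsimp only
        rw [gammaLogMoment_zero hx, gammaLogMoment_zero (by linarith), Gamma_add_one hx.ne']
    have := (((hasDerivAt_id s).mul (hasDerivAt_gammaLogMoment 0 hs)).congr_of_eventuallyEq
      hrec.symm).unique (hasDerivAt_gammaLogMoment_add_one 0 hs)
    simp only [id, one_mul] at this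
    push_cast
    linarith
  | succ k ih =>
    have hrec : (fun x => (k + 1) * gammaLogMoment k x + x * gammaLogMoment (k + 1) x) =ᶠ[𝓝 s]
        fun x => gammaLogMoment (k + 1) (x + 1) :=
      (eventually_gt_nhds hs).mono fun x hx => (ih hx).symm
    have := ((((hasDerivAt_gammaLogMoment k hs).const_mul ((k : ℝ) + 1)).add
      ((hasDerivAt_id s).mul (hasDerivAt_gammaLogMoment (k + 1) hs))).congr_of_eventuallyEq
      hrec.symm).unique (hasDerivAt_gammaLogMoment_add_one (k + 1) hs)
    simp only [id, one_mul] at this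
    push_cast
    linarith

lemma mul_log_mul_pow_eq_sum {b t : ℝ} (hb : 0 < b) (ht : 0 < t) (s : ℝ) (k : ℕ) :
    exp (-t) * t ^ (s - 1) * (t * log (b * t)) ^ k =
      ∑ i ∈ Finset.range (k + 1),
        log b ^ (k - i) * k.choose i * (exp (-t) * t ^ (s + k - 1) * log t ^ i) := by
  rw [show s + k - 1 = s - 1 + k by ring, rpow_add_natCast ht.ne', mul_pow,
    log_mul hb.ne' ht.ne', add_comm (log b), add_pow, Finset.mul_sum, Finset.mul_sum]
  refine Finset.sum_congr rfl fun i _ => ?_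
  ring

lemma integrableOn_mul_log_mul_pow {b s : ℝ} (hb : 0 < b) (hs : 0 < s) (k : ℕ) :
    IntegrableOn (fun t => exp (-t) * t ^ (s - 1) * (t * log (b * t)) ^ k) (Ioi 0) := by
  refine IntegrableOn.congr_fun ?_ (fun t ht => (mul_log_mul_pow_eq_sum hb ht s k).symm)
    measurableSet_Ioi
  exact integrable_finsetSum (Finset.range (k + 1)) fun i _ =>
    (integrableOn_gammaLogMoment_integrand i (by positivity)).const_mul _

lemma integral_mul_log_mul_pow {b s : ℝ} (hb : 0 < b) (hs : 0 < s) (k : ℕ) :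
    ∫ t in Ioi 0, exp (-t) * t ^ (s - 1) * (t * log (b * t)) ^ k =
      ∑ i ∈ Finset.range (k + 1), log b ^ (k - i) * k.choose i * gammaLogMoment i (s + k) := by
  rw [setIntegral_congr_fun measurableSet_Ioi fun t ht => mul_log_mul_pow_eq_sum hb ht s k,
    integral_finsetSum _ fun i _ =>
      (integrableOn_gammaLogMoment_integrand i (by positivity)).const_mul _]
  simp only [integral_const_mul, gammaLogMoment]

lemma integral_mul_log_mul {b s : ℝ} (hb : 0 < b) (hs : 0 < s) :
    ∫ t in Ioi 0, exp (-t) * t ^ (s - 1) * (t * log (b * t)) =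
      s * Gamma s * (log b + digamma (s + 1)) := by
  have h := integral_mul_log_mul_pow hb hs 1
  simp only [pow_one, Finset.sum_range_succ, Finset.sum_range_zero] at h
  rw [h]
  have hs1 : 0 < s + 1 := by positivity
  simp [gammaLogMoment_zero hs1, gammaLogMoment_one hs1, Gamma_add_one hs.ne']
  ring

lemma integral_mul_log_mul_sq {b s : ℝ} (hb : 0 < b) (hs : 0 < s) :
    ∫ t in Ioi 0, exp (-t) * t ^ (s - 1) * (t * log (b * t)) ^ 2 =
      s * Gamma s * (2 * (log b + digamma (s + 1)) +
        (s + 1) * (trigamma (s + 1) + (log b + digamma (s + 1)) ^ 2)) := by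
  have hs1 : 0 < s + 1 := by positivity
  rw [integral_mul_log_mul_pow hb hs 2]
  simp only [Finset.sum_range_succ, Finset.sum_range_zero]
  rw [show s + (2 : ℕ) = s + 1 + 1 by push_cast; ring, gammaLogMoment_succ_add_one 1 hs1,
    gammaLogMoment_succ_add_one 0 hs1, gammaLogMoment_zero (by positivity), Gamma_add_one hs1.ne',
    gammaLogMoment_two hs1, gammaLogMoment_one hs1, gammaLogMoment_zero hs1, Gamma_add_one hs.ne']
  norm_num
  ring

lemma integral_mul_quadratic_mul_log_mul {b s : ℝ} (hb : 0 < b) (hs : 0 < s) {f : ℝ → ℝ}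
    (α β γ : ℝ) (hf : ∀ t, f t = α + β * (t * log (b * t)) + γ * (t * log (b * t)) ^ 2) :
    ∫ t in Ioi 0, exp (-t) * t ^ (s - 1) * f t =
      Gamma s * (α + s * (β * (log b + digamma (s + 1)) + γ * (2 * (log b + digamma (s + 1)) +
        (s + 1) * (trigamma (s + 1) + (log b + digamma (s + 1)) ^ 2)))) := by
  have h0 := (GammaIntegral_convergent hs).const_mul α
  have h1 := (integrableOn_mul_log_mul_pow hb hs 1).const_mul β
  have h2 := (integrableOn_mul_log_mul_pow hb hs 2).const_mul γ
  simp only [pow_one] at h1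
  calc _ = ∫ t in Ioi 0, α * (exp (-t) * t ^ (s - 1)) +
        β * (exp (-t) * t ^ (s - 1) * (t * log (b * t))) +
        γ * (exp (-t) * t ^ (s - 1) * (t * log (b * t)) ^ 2) := by
        congr 1 with t; rw [hf]; ring
    _ = _ := by
      rw [integral_add ?_ h2, integral_add h0 h1, integral_const_mul, integral_const_mul,
        integral_const_mul, ← Gamma_eq_integral hs, integral_mul_log_mul hb hs,
        integral_mul_log_mul_sq hb hs]
      · ring
      · exact h0.add h1

lemma integral_comp_rpow_Ioi_eq_inv_mul {l : ℝ} (hl : 0 < l) (g : ℝ → ℝ) :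
    ∫ x in Ioi 0, g (x ^ l) = l⁻¹ * ∫ u in Ioi 0, u ^ (l⁻¹ - 1) * g u := by
  rw [← integral_comp_rpow_Ioi_of_pos (g := fun x => g (x ^ l)) (inv_pos.2 hl),
    ← integral_const_mul]
  refine setIntegral_congr_fun measurableSet_Ioi fun u (hu : 0 < u) => ?_
  rw [smul_eq_mul, rpow_inv_rpow hu.le hl.ne', mul_assoc]

lemma integral_comp_mul_abs_rpow {l c : ℝ} (hl : 0 < l) (hc : 0 < c) (g : ℝ → ℝ) :
    ∫ y, g (c * |y| ^ l) =
      2 * c ^ (-l⁻¹) * l⁻¹ * ∫ u in Ioi 0, u ^ (l⁻¹ - 1) * g u := by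
  have hscale := integral_comp_mul_left_Ioi (fun x => g (x ^ l)) 0 (rpow_pos_of_pos hc l⁻¹)
  rw [mul_zero, integral_comp_rpow_Ioi_eq_inv_mul hl, smul_eq_mul, ← rpow_neg hc.le]
    at hscale
  rw [integral_comp_abs (f := fun x => g (c * x ^ l)), mul_assoc, mul_assoc 2, ← hscale]
  congr 1
  refine setIntegral_congr_fun measurableSet_Ioi fun x (hx : 0 < x) => ?_
  rw [mul_rpow (rpow_nonneg hc.le _) hx.le, rpow_inv_rpow hc.le hl.ne']

lemma integral_comp_mul_epdDensity {l : ℝ} (hl : 0 < l) (q : ℝ → ℝ) :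
    ∫ y, q (1 / 2 * |y| ^ l) * epdDensity l y =
      (∫ t in Ioi 0, exp (-t) * t ^ (1 / l - 1) * q t) / Gamma (1 / l) := by
  have hdens : ∀ y, q (1 / 2 * |y| ^ l) * epdDensity l y =
      q (1 / 2 * |y| ^ l) * exp (-(1 / 2 * |y| ^ l)) /
        ((2 : ℝ) ^ (1 + 1 / l) * Gamma (1 + 1 / l)) := fun y => by
    rw [epdDensity, neg_mul]; ring
  have hcov := integral_comp_mul_abs_rpow hl one_half_pos fun u => q u * exp (-u)
  simp_rw [hdens]
  rw [integral_div, hcov, add_comm 1 (1 / l),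
    Gamma_add_one (by positivity), rpow_add_one two_ne_zero, one_div, inv_rpow zero_le_two,
    rpow_neg zero_le_two, inv_inv]
  have hintegrand : (fun u => u ^ (l⁻¹ - 1) * (q u * exp (-u))) =
      fun t => exp (-t) * t ^ (l⁻¹ - 1) * q t := by
    funext t; ring
  have hΓ := Gamma_pos_of_pos (inv_pos.2 hl)
  rw [hintegrand]
  field_simp

lemma dTheta2_eq {l : ℝ} (hl : 0 < l) (y : ℝ) :
    dTheta2 l y =
      ((log 2 + digamma (1 + 1 / l)) / l - 1 / 2 * |y| ^ l * log (2 * (1 / 2 * |y| ^ l))) / l := by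
  rw [dTheta2, show 2 * (1 / 2 * |y| ^ l) = |y| ^ l by ring]
  rcases eq_or_ne y 0 with rfl | hy
  · simp [zero_rpow hl.ne']
    field_simp
  · rw [log_rpow (abs_pos.2 hy)]
    field_simp
    ring

theorem dTheta2_mean_and_variance (l : ℝ) (hl : 1 ≤ l) :
    (∫ y : ℝ, dTheta2 l y * epdDensity l y = 0) ∧
    (∫ y : ℝ, (dTheta2 l y) ^ 2 * epdDensity l y) -
        (∫ y : ℝ, dTheta2 l y * epdDensity l y) ^ 2
      = (1 / l ^ 3) *
          ((Real.log 2 + digamma (1 + 1 / l)) * (2 + (Real.log 2 + digamma (1 + 1 / l)))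
            + (1 + 1 / l) * trigamma (1 + 1 / l)) := by
  have hl0 : 0 < l := by linarith
  have hquad := @integral_mul_quadratic_mul_log_mul 2 (1 / l) two_pos (one_div_pos.2 hl0)
  rw [add_comm (1 / l) 1] at hquad
  set ν := log 2 + digamma (1 + 1 / l)
  have hΓ : Gamma (1 / l) ≠ 0 := (Gamma_pos_of_pos (by positivity)).ne'
  have hmoment (k : ℕ) : ∫ y, dTheta2 l y ^ k * epdDensity l y =
      (∫ t in Ioi 0, exp (-t) * t ^ (1 / l - 1) * ((ν / l - t * log (2 * t)) / l) ^ k) /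
        Gamma (1 / l) := by
    simp_rw [dTheta2_eq hl0]
    exact integral_comp_mul_epdDensity hl0 fun t => ((ν / l - t * log (2 * t)) / l) ^ k
  have hmean : ∫ y, dTheta2 l y * epdDensity l y = 0 := by
    have h1 := hmoment 1
    simp only [pow_one] at h1
    rw [h1, hquad (ν / l ^ 2) (-1 / l) 0 fun t => by ring]
    field_simp
    ring
  refine ⟨hmean, ?_⟩
  rw [hmean, hmoment 2, hquad (ν ^ 2 / l ^ 4) (-2 * ν / l ^ 3) (1 / l ^ 2) fun t => by ring]
  field_simp
  ring
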